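/- arXiv:2303.09191 — 2 statements merged into one kernel-verified Lean document; each statement's English description precedes it below -/
import Mathlib

section
/- For a spherical bigon determined by radii r₁, r₂ ∈ (0, π/2) and intersection angle θ ∈ (0, π/2], the symmetry ∂l₁/∂k₂ = ∂l₂/∂k₁ holds, where kᵢ = cot(rᵢ) and lᵢ = 2βᵢ·sin(rᵢ) are the arc lengths. -/
/-
Writing `kᵢ = cot rᵢ`, one has `sin θ · (1 + cot² β₁) = sin² r₁ · Q / sin θ` with
`Q = k₁² + k₂² + 2 k₁ k₂ cos θ + sin² θ`. Hence `∂l₁/∂k₂ = -2 sin² r₁ / (sin θ (1 + cot² β₁))`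
equals `-2 sin θ / Q`, which is symmetric in `k₁, k₂`; this is the spherical sine law in
algebraic form.
-/

open Real Set

/-- The inverse cotangent, valued in `(0, π)`. -/
noncomputable def arccot (x : ℝ) : ℝ := π / 2 - Real.arctan x

theorem hasDerivAt_arccot (x : ℝ) : HasDerivAt arccot (-(1 + x ^ 2)⁻¹) x :=
  (hasDerivAt_arctan' x).const_sub (π / 2)

theorem hasDerivAt_two_mul_arccot_affine_mul (s c t k : ℝ) :
    HasDerivAt (fun k => 2 * arccot ((k * s + c) / t) * s)
      (-(2 * s ^ 2 / (t * (1 + ((k * s + c) / t) ^ 2)))) k := by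
  have affine : HasDerivAt (fun k : ℝ => (k * s + c) / t) (s / t) k := by
    simpa using (((hasDerivAt_id k).mul_const s).add_const c).div_const t
  refine ((((hasDerivAt_arccot _).comp k affine).const_mul 2).mul_const s).congr_deriv ?_
  simp only [div_eq_mul_inv, mul_inv]
  ring

theorem sin_mul_one_add_sq_bigon_cot {r θ : ℝ} (hr : sin r ≠ 0) (hθ : sin θ ≠ 0) (k : ℝ) :
    sin θ * (1 + ((k * sin r + cos r * cos θ) / sin θ) ^ 2)
      = sin r ^ 2 * (cot r ^ 2 + k ^ 2 + 2 * cot r * k * cos θ + sin θ ^ 2) / sin θ := by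
  rw [cot_eq_cos_div_sin]
  field_simp
  linear_combination cos r ^ 2 * sin_sq_add_cos_sq θ - sin θ ^ 2 * sin_sq_add_cos_sq r

theorem deriv_bigon_arc_length {r θ : ℝ} (hr : sin r ≠ 0) (hθ : sin θ ≠ 0) (k : ℝ) :
    deriv (fun k => 2 * arccot ((k * sin r + cos r * cos θ) / sin θ) * sin r) k
      = -(2 * sin θ / (cot r ^ 2 + k ^ 2 + 2 * cot r * k * cos θ + sin θ ^ 2)) := by
  rw [(hasDerivAt_two_mul_arccot_affine_mul _ _ _ k).deriv,
    sin_mul_one_add_sq_bigon_cot hr hθ]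
  field_simp

/-- For a spherical bigon with radii `r₁, r₂ ∈ (0, π/2)` and intersection angle
`θ ∈ (0, π/2]`, with `kᵢ = cot rᵢ`, the half-angle `βᵢ` at the center `vᵢ` given by
`cot βᵢ = (k_{3-i} sin rᵢ + cos rᵢ cos θ)/sin θ` and arc lengths `lᵢ = 2 βᵢ sin rᵢ`,
the symmetry `∂l₁/∂k₂ = ∂l₂/∂k₁` holds. -/
theorem bigon_arc_length_symmetry (r₁ r₂ θ : ℝ)
    (hr₁ : r₁ ∈ Ioo 0 (π / 2)) (hr₂ : r₂ ∈ Ioo 0 (π / 2)) (hθ : θ ∈ Ioc 0 (π / 2))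
    (l₁ l₂ : ℝ → ℝ)
    (hl₁ : ∀ k, l₁ k =
      2 * arccot ((k * Real.sin r₁ + Real.cos r₁ * Real.cos θ) / Real.sin θ) * Real.sin r₁)
    (hl₂ : ∀ k, l₂ k =
      2 * arccot ((k * Real.sin r₂ + Real.cos r₂ * Real.cos θ) / Real.sin θ) * Real.sin r₂) :
    deriv l₁ (Real.cot r₂) = deriv l₂ (Real.cot r₁) := by
  have sin_ne_zero_of_mem {x : ℝ} (hx : x ∈ Ioc 0 (π / 2)) : sin x ≠ 0 :=
    (sin_pos_of_pos_of_lt_pi hx.1 (by linarith [hx.2, pi_pos])).ne'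
  have hs₁ := sin_ne_zero_of_mem (Ioo_subset_Ioc_self hr₁)
  have hs₂ := sin_ne_zero_of_mem (Ioo_subset_Ioc_self hr₂)
  have hsθ := sin_ne_zero_of_mem hθ
  rw [funext hl₁, funext hl₂, deriv_bigon_arc_length hs₁ hsθ, deriv_bigon_arc_length hs₂ hsθ]
  ring
end

section
/- If H : ℝᴺ → ℝ is a strictly convex C¹ function with a critical point, then H is proper, i.e., H(x) → ∞ as |x| → ∞. -/
/-!
A convex function with zero derivative at `P` is minimal there, and strict convexity makes the
minimum strict, so `H` exceeds `H P` by some `c > 0` on the unit sphere around `P`. Convexity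
along the segment from `P` to `x` turns this into the linear growth
`H P + c * dist x P ≤ H x` for `dist x P ≥ 1`.
-/

open Set Filter Metric AffineMap

lemma StrictConvexOn.lt_of_isMinOn {𝕜 E β : Type*}
    [Field 𝕜] [LinearOrder 𝕜] [IsStrictOrderedRing 𝕜]
    [AddCommMonoid β] [LinearOrder β] [IsOrderedAddMonoid β]
    [AddCommMonoid E] [SMul 𝕜 E] [Module 𝕜 β] [PosSMulMono 𝕜 β]
    {f : E → β} {s : Set E} {a x : E} (hf : StrictConvexOn 𝕜 s f) (hfa : IsMinOn f s a)
    (ha : a ∈ s) (hx : x ∈ s) (hxa : x ≠ a) : f a < f x := by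
  refine (hfa hx).lt_of_ne fun h ↦ hxa ?_
  exact hf.eq_of_isMinOn (fun y hy ↦ h ▸ hfa hy) hfa hx ha

section NormedSpace

variable {E : Type*} [NormedAddCommGroup E] [NormedSpace ℝ E] {f : E → ℝ} {a : E}

lemma ConvexOn.isMinOn_of_hasFDerivAt_eq_zero (hf : ConvexOn ℝ univ f)
    (hfa : HasFDerivAt f (0 : E →L[ℝ] ℝ) a) : IsMinOn f univ a := by
  intro x _
  set g : ℝ →ᵃ[ℝ] E := lineMap a x
  have hline : ConvexOn ℝ univ (f ∘ g) := hf.comp_affineMap g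
  have hderiv : HasDerivAt (f ∘ g) 0 0 := by
    have hfa' : HasFDerivAt f (0 : E →L[ℝ] ℝ) (g 0) := by simpa [g] using hfa
    simpa using hfa'.comp_hasDerivAt (0 : ℝ) hasDerivAt_lineMap
  have hmin : IsMinOn (f ∘ g) univ 0 :=
    hline.isMinOn_of_rightDeriv_eq_zero (by simp)
      (hderiv.hasDerivWithinAt.derivWithin (uniqueDiffWithinAt_Ioi 0))
  simpa [g] using hmin (mem_univ (1 : ℝ))

lemma ConvexOn.add_dist_mul_le (hf : ConvexOn ℝ univ f) {m : ℝ}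
    (hm : ∀ z ∈ sphere a 1, m ≤ f z) {x : E} (hx : 1 ≤ dist x a) :
    f a + dist x a * (m - f a) ≤ f x := by
  have hpos : 0 < dist x a := one_pos.trans_le hx
  set t := (dist x a)⁻¹
  have ht : t * dist x a = 1 := inv_mul_cancel₀ hpos.ne'
  have hz : lineMap a x t ∈ sphere a 1 := by
    rw [mem_sphere, dist_lineMap_left, Real.norm_eq_abs, abs_of_pos (inv_pos.2 hpos),
      dist_comm a x, ht]
  have hconv : f (lineMap a x t) ≤ (1 - t) * f a + t * f x := by
    simpa [lineMap_apply_module] using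
      hf.2 (mem_univ a) (mem_univ x) (sub_nonneg.2 (inv_le_one_of_one_le₀ hx))
        (inv_nonneg.2 hpos.le) (sub_add_cancel 1 t)
  have hscaled : dist x a * ((1 - t) * f a + t * f x) = (dist x a - 1) * f a + f x := by
    linear_combination (f x - f a) * ht
  linarith [mul_le_mul_of_nonneg_left ((hm _ hz).trans hconv) hpos.le]

lemma ConvexOn.tendsto_cocompact_atTop_of_forall_lt [ProperSpace E] (hf : ConvexOn ℝ univ f)
    (hcont : Continuous f) (hmin : ∀ x ≠ a, f a < f x) :
    Tendsto f (cocompact E) atTop := by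
  nontriviality E
  obtain ⟨z, hz, hzmin⟩ := (isCompact_sphere a 1).exists_isMinOn
    (NormedSpace.sphere_nonempty.2 zero_le_one) hcont.continuousOn
  have hgap : 0 < f z - f a :=
    sub_pos.2 (hmin z (ne_of_mem_sphere hz one_ne_zero))
  have hdist := tendsto_dist_right_cocompact_atTop a
  refine tendsto_atTop_mono' _ ?_
    (tendsto_atTop_add_const_left _ (f a) (hdist.atTop_mul_const hgap))
  filter_upwards [hdist.eventually_ge_atTop 1] with x hx
  exact hf.add_dist_mul_le hzmin hx

end NormedSpace

/-- A strictly convex `C¹` function on `ℝᴺ` with a critical point is proper: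
`H(x) → ∞` as `|x| → ∞`. -/
theorem strictConvex_critical_proper {N : ℕ}
    {H : EuclideanSpace ℝ (Fin N) → ℝ}
    (hconv : StrictConvexOn ℝ Set.univ H) (hdiff : ContDiff ℝ 1 H)
    {P : EuclideanSpace ℝ (Fin N)} (hcrit : fderiv ℝ H P = 0) :
    Tendsto H (cocompact (EuclideanSpace ℝ (Fin N))) atTop := by
  have hP : HasFDerivAt H 0 P := hcrit ▸ (hdiff.differentiable one_ne_zero P).hasFDerivAt
  have hmin := hconv.convexOn.isMinOn_of_hasFDerivAt_eq_zero hP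
  exact hconv.convexOn.tendsto_cocompact_atTop_of_forall_lt hdiff.continuous
    fun x hx ↦ hconv.lt_of_isMinOn hmin (mem_univ P) (mem_univ x) hx
end
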